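/- arXiv:2106.02924 — 2 statements merged into one kernel-verified Lean document; each statement's English description precedes it below -/
import Mathlib

section
/- Let G be a locally compact abelian group with Haar measure μ. If X, Y are nonempty compact subsets of G with μ(X·Y) < μ(X) + μ(Y), then there exists a compact subgroup H of G with μ(H) ≥ μ(X) + μ(Y) − μ(X·Y); in particular μ(X·Y) ≥ min{μ(X) + μ(Y) − sup_H μ(H), μ(G)} where H ranges over proper compact subgroups of G with μ(H) ≤ μ(X·Y). -/
open MeasureTheory Set Pointwise
open scoped ENNReal

/-!
Kneser's e-transform argument. Call a pair `(A, B)` of compact sets, `B` nonempty, admissible if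
`A * B ⊆ X * Y` and `μ X + μ Y ≤ μ A + μ B`. Zorn's lemma, with `A` growing and `B` shrinking,
gives a maximal admissible pair above `(X, Y)`: a chain is bounded by the closure of the union of
its `A`s and the intersection of its `B`s, because a Haar measure is continuous along directed
intersections of compact sets. For `a ∈ A`, `b ∈ B` and `e = a * b⁻¹` the e-transform
`(A ∪ e • B, B ∩ e⁻¹ • A)` is again admissible and `μ`-neutral, so maximality forces
`e • B ⊆ A`. Hence `b⁻¹ * b'` stabilises `A` for all `b, b' ∈ B`, and the closure `H` of the
stabiliser of `A` is a compact subgroup with `μ B ≤ μ H ≤ μ A ≤ μ (X * Y)`; finally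
`μ X + μ Y - μ (X * Y) ≤ μ B`.
-/

namespace MeasureTheory

theorem measure_iInter_eq_iInf_of_directed_isCompact {α ι : Type*} [TopologicalSpace α]
    [T2Space α] [MeasurableSpace α] (μ : Measure α) [μ.OuterRegular] [Nonempty ι]
    {T : ι → Set α} (hd : Directed (· ⊇ ·) T) (hc : ∀ i, IsCompact (T i)) :
    μ (⋂ i, T i) = ⨅ i, μ (T i) := by
  refine le_antisymm (le_iInf fun i ↦ measure_mono (iInter_subset T i)) ?_
  refine le_of_forall_gt fun r hr ↦ ?_
  obtain ⟨U, hTU, hU, hUr⟩ := (⋂ i, T i).exists_isOpen_lt_of_lt r hr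
  obtain ⟨i, hi⟩ := exists_subset_nhds_of_isCompact hd hc fun x hx ↦ hU.mem_nhds (hTU hx)
  exact (iInf_le _ i).trans_lt ((measure_mono hi).trans_lt hUr)

theorem IsHaarMeasure.measure_iInter_eq_iInf_of_directed_isCompact {G ι : Type*} [Group G]
    [TopologicalSpace G] [IsTopologicalGroup G] [LocallyCompactSpace G] [T2Space G]
    [MeasurableSpace G] [BorelSpace G] (μ : Measure G) [μ.IsHaarMeasure] [Nonempty ι]
    {T : ι → Set G} (hd : Directed (· ⊇ ·) T) (hc : ∀ i, IsCompact (T i)) :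
    μ (⋂ i, T i) = ⨅ i, μ (T i) := by
  -- `μ` need not be regular, but it agrees on compact sets with a multiple of the regular `haar`.
  have hμ : ∀ s, IsCompact s → μ s = (Measure.haarScalarFactor μ Measure.haar • Measure.haar) s :=
    fun s hs ↦ Measure.measure_isMulInvariant_eq_smul_of_isCompact_closure _ _ hs.closure
  have hT : IsCompact (⋂ i, T i) :=
    (hc (Classical.arbitrary ι)).of_isClosed_subset (isClosed_iInter fun i ↦ (hc i).isClosed)
      (iInter_subset T _)
  simp only [hμ _ hT, hμ _ (hc _)]
  exact MeasureTheory.measure_iInter_eq_iInf_of_directed_isCompact _ hd hc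

theorem measure_union_smul_add_measure_inter_inv_smul {G : Type*} [Group G] [MeasurableSpace G]
    [MeasurableMul G] (μ : Measure G) [μ.IsMulLeftInvariant] {A : Set G} (hA : MeasurableSet A)
    (B : Set G) (e : G) : μ (A ∪ e • B) + μ (B ∩ e⁻¹ • A) = μ A + μ B := by
  have : e • (B ∩ e⁻¹ • A) = A ∩ e • B := by rw [smul_set_inter, smul_inv_smul, inter_comm]
  rw [← measure_smul μ e (B ∩ e⁻¹ • A), this, measure_union_add_inter' hA, measure_smul]

end MeasureTheory

namespace Kneser

theorem exists_isCompact_subgroup_of_smul_subset {G : Type*} [CommGroup G] [TopologicalSpace G]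
    [IsTopologicalGroup G] [T2Space G] {A B : Set G} (hA : IsCompact A)
    (hAB : ∀ a ∈ A, ∀ b ∈ B, (a * b⁻¹) • B ⊆ A) {a₀ b₀ : G} (ha₀ : a₀ ∈ A) (hb₀ : b₀ ∈ B) :
    ∃ H : Subgroup G, IsCompact (H : Set G) ∧ b₀⁻¹ • B ⊆ H ∧ (H : Set G) ⊆ a₀⁻¹ • A := by
  have hmem : ∀ a ∈ A, ∀ b ∈ B, ∀ b' ∈ B, b⁻¹ * b' * a ∈ A := fun a ha b hb b' hb' ↦ by
    simpa only [smul_eq_mul, mul_comm a, mul_assoc] using hAB a ha b hb (smul_mem_smul_set hb')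
  have hstab : b₀⁻¹ • B ⊆ MulAction.stabilizer G A := by
    rintro _ ⟨b, hb, rfl⟩
    refine MulAction.mem_stabilizer_set.2 fun x ↦ ⟨fun hx ↦ ?_, fun hx ↦ hmem x hx b₀ hb₀ b hb⟩
    simpa [smul_eq_mul, mul_assoc] using hmem _ hx b hb b₀ hb₀
  have hA' : IsCompact (a₀⁻¹ • A) := hA.smul a₀⁻¹
  have hsub : ((MulAction.stabilizer G A).topologicalClosure : Set G) ⊆ a₀⁻¹ • A := by
    refine closure_minimal (fun g hg ↦ ?_) hA'.isClosed
    rw [mem_smul_set_iff_inv_smul_mem, inv_inv, smul_eq_mul, mul_comm]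
    exact (MulAction.mem_stabilizer_set.1 hg a₀).2 ha₀
  exact ⟨_, hA'.of_isClosed_subset (Subgroup.isClosed_topologicalClosure _) hsub,
    hstab.trans (Subgroup.le_topologicalClosure _), hsub⟩

variable {G : Type*} [MeasurableSpace G] (μ : Measure G) (K : Set G) (t : ℝ≥0∞)

structure IsAdmissible [Mul G] [TopologicalSpace G] (A B : Set G) : Prop where
  isCompact_left : IsCompact A
  isCompact_right : IsCompact B
  nonempty_right : B.Nonempty
  mul_subset : A * B ⊆ K
  le_measure_add : t ≤ μ A + μ B

-- Under `≤` on `Set G × (Set G)ᵒᵈ` the first component grows and the second one shrinks.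
def admissiblePairs [Mul G] [TopologicalSpace G] : Set (Set G × (Set G)ᵒᵈ) :=
  {p | IsAdmissible μ K t p.1 (OrderDual.ofDual p.2)}

section Chains

variable [Group G] [TopologicalSpace G] [IsTopologicalGroup G] [LocallyCompactSpace G]
  [T2Space G] [BorelSpace G] [μ.IsHaarMeasure] {K t}

theorem IsAdmissible.closure_iUnion_iInter {ι : Type*} [Nonempty ι] {A B : ι → Set G}
    (hK : IsCompact K) (h : ∀ i, IsAdmissible μ K t (A i) (B i)) (hB : Directed (· ⊇ ·) B) :
    IsAdmissible μ K t (closure (⋃ i, A i)) (⋂ i, B i) := by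
  have hBc i : IsCompact (B i) := (h i).isCompact_right
  obtain ⟨y, hy⟩ : (⋂ i, B i).Nonempty :=
    IsCompact.nonempty_iInter_of_directed_nonempty_isCompact_isClosed B hB
      (fun i ↦ (h i).nonempty_right) hBc fun i ↦ (hBc i).isClosed
  have hmul : closure (⋃ i, A i) * ⋂ i, B i ⊆ K := by
    rintro _ ⟨a, ha, b, hb, rfl⟩
    have hmaps : MapsTo (· * b) (⋃ i, A i) K := fun x hx ↦ by
      obtain ⟨i, hi⟩ := mem_iUnion.1 hx
      exact (h i).mul_subset (mul_mem_mul hi (mem_iInter.1 hb i))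
    exact hK.isClosed.closure_subset
      (map_mem_closure (f := (· * b)) (continuous_mul_const b) ha hmaps)
  refine ⟨?_, ?_, ⟨y, hy⟩, hmul, ?_⟩
  · refine (hK.mul (isCompact_singleton (x := y⁻¹))).of_isClosed_subset isClosed_closure
      fun a ha ↦ ⟨a * y, hmul (mul_mem_mul ha hy), y⁻¹, rfl, mul_inv_cancel_right a y⟩
  · exact (hBc (Classical.arbitrary ι)).of_isClosed_subset
      (isClosed_iInter fun i ↦ (hBc i).isClosed) (iInter_subset B _)
  · rw [IsHaarMeasure.measure_iInter_eq_iInf_of_directed_isCompact μ hB hBc, ENNReal.add_iInf]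
    exact le_iInf fun i ↦ (h i).le_measure_add.trans
      (add_le_add_left (measure_mono ((subset_iUnion A i).trans subset_closure)) _)

theorem exists_upperBound_of_isChain (hK : IsCompact K) {c : Set (Set G × (Set G)ᵒᵈ)}
    (hc : c ⊆ admissiblePairs μ K t) (hch : IsChain (· ≤ ·) c) {p} (hp : p ∈ c) :
    ∃ ub ∈ admissiblePairs μ K t, ∀ q ∈ c, q ≤ ub := by
  have : Nonempty c := ⟨⟨p, hp⟩⟩
  have hdir : Directed (· ⊇ ·) fun q : c ↦ OrderDual.ofDual q.1.2 :=
    IsChain.directed (hch.mono_rel fun _ _ h ↦ h.2)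
  refine ⟨(closure (⋃ q : c, q.1.1), OrderDual.toDual (⋂ q : c, OrderDual.ofDual q.1.2)),
    IsAdmissible.closure_iUnion_iInter μ hK (fun q ↦ hc q.2) hdir, fun q hq ↦ ⟨?_, ?_⟩⟩
  · exact (subset_iUnion (fun q : c ↦ q.1.1) ⟨q, hq⟩).trans subset_closure
  · exact iInter_subset (fun q : c ↦ OrderDual.ofDual q.1.2) ⟨q, hq⟩

end Chains

section Transform

variable [CommGroup G] [TopologicalSpace G] [IsTopologicalGroup G] [T2Space G] [BorelSpace G]
  [μ.IsMulLeftInvariant] {K t}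

theorem IsAdmissible.union_smul_inter_inv_smul {A B : Set G} (h : IsAdmissible μ K t A B)
    {b e : G} (hb : b ∈ B) (he : e * b ∈ A) :
    IsAdmissible μ K t (A ∪ e • B) (B ∩ e⁻¹ • A) := by
  refine ⟨h.isCompact_left.union (h.isCompact_right.smul e),
    h.isCompact_right.inter_right (h.isCompact_left.smul e⁻¹).isClosed,
    ⟨b, hb, by rwa [mem_smul_set_iff_inv_smul_mem, inv_inv]⟩, ?_, ?_⟩
  · rw [union_mul]
    refine union_subset ((mul_subset_mul_left inter_subset_left).trans h.mul_subset) ?_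
    refine (mul_subset_mul_left inter_subset_right).trans ?_
    rw [smul_mul_smul_comm, mul_inv_cancel, one_smul, mul_comm]
    exact h.mul_subset
  · rw [measure_union_smul_add_measure_inter_inv_smul μ h.isCompact_left.measurableSet]
    exact h.le_measure_add

theorem smul_subset_of_maximal {p : Set G × (Set G)ᵒᵈ}
    (hp : Maximal (· ∈ admissiblePairs μ K t) p) {a b : G} (ha : a ∈ p.1)
    (hb : b ∈ OrderDual.ofDual p.2) : (a * b⁻¹) • OrderDual.ofDual p.2 ⊆ p.1 := by
  have hq : (p.1 ∪ (a * b⁻¹) • OrderDual.ofDual p.2,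
      OrderDual.toDual (OrderDual.ofDual p.2 ∩ (a * b⁻¹)⁻¹ • p.1)) ∈ admissiblePairs μ K t :=
    IsAdmissible.union_smul_inter_inv_smul μ hp.prop hb (by rwa [inv_mul_cancel_right])
  exact subset_union_right.trans (hp.2 hq ⟨subset_union_left, inter_subset_left⟩).1

end Transform

theorem exists_isCompact_subgroup_measure_le [CommGroup G] [TopologicalSpace G]
    [IsTopologicalGroup G] [LocallyCompactSpace G] [T2Space G] [BorelSpace G] [μ.IsHaarMeasure]
    {X Y : Set G} (hXne : X.Nonempty) (hYne : Y.Nonempty) (hX : IsCompact X) (hY : IsCompact Y) :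
    ∃ H : Subgroup G, IsCompact (H : Set G) ∧
      μ X + μ Y - μ (X * Y) ≤ μ H ∧ μ H ≤ μ (X * Y) := by
  obtain ⟨p, hXYp, hp⟩ := zorn_le_nonempty₀ (admissiblePairs μ (X * Y) (μ X + μ Y))
    (fun _ hc hch _ hq ↦ exists_upperBound_of_isChain μ (hX.mul hY) hc hch hq)
    (X, OrderDual.toDual Y) ⟨hX, hY, hYne, subset_rfl, le_rfl⟩
  set A := p.1
  set B := OrderDual.ofDual p.2
  have hAB : IsAdmissible μ (X * Y) (μ X + μ Y) A B := hp.prop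
  obtain ⟨a₀, ha₀⟩ := hXne.mono hXYp.1
  obtain ⟨b₀, hb₀⟩ := hAB.nonempty_right
  obtain ⟨H, hH, hBH, hHA⟩ := exists_isCompact_subgroup_of_smul_subset hAB.isCompact_left
    (fun a ha b hb ↦ smul_subset_of_maximal μ hp ha hb) ha₀ hb₀
  have hA : μ A ≤ μ (X * Y) := by
    rw [← measure_smul μ b₀ A]
    exact measure_mono ((smul_set_subset_mul hb₀).trans (mul_comm B A ▸ hAB.mul_subset))
  refine ⟨H, hH, tsub_le_iff_left.2 ?_, ?_⟩
  · calc μ X + μ Y ≤ μ A + μ B := hAB.le_measure_add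
      _ = μ A + μ (b₀⁻¹ • B) := by rw [measure_smul]
      _ ≤ μ (X * Y) + μ H := add_le_add hA (measure_mono hBH)
  · calc μ H ≤ μ (a₀⁻¹ • A) := measure_mono hHA
      _ = μ A := measure_smul μ a₀⁻¹ A
      _ ≤ μ (X * Y) := hA

end Kneser

theorem kneser_abelian_general
    {G : Type*} [CommGroup G] [TopologicalSpace G] [IsTopologicalGroup G]
    [LocallyCompactSpace G] [T2Space G]
    [MeasurableSpace G] [BorelSpace G]
    (μ : Measure G) [μ.IsHaarMeasure]
    (X Y : Set G) (hXne : X.Nonempty) (hYne : Y.Nonempty)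
    (hX : IsCompact X) (hY : IsCompact Y) :
    (∃ H : Subgroup G, IsCompact (H : Set G) ∧
      μ X + μ Y - μ (X * Y) ≤ μ (H : Set G)) ∧
    min (μ X + μ Y -
        ⨆ H : {H : Subgroup G // H ≠ ⊤ ∧ IsCompact (H : Set G) ∧
          μ (H : Set G) ≤ μ (X * Y)}, μ ((H : Subgroup G) : Set G))
      (μ Set.univ) ≤ μ (X * Y) := by
  obtain ⟨H, hH, hdef, hHK⟩ := Kneser.exists_isCompact_subgroup_measure_le μ hXne hYne hX hY
  refine ⟨⟨H, hH, hdef⟩, ?_⟩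
  rcases le_or_gt (μ univ) (μ (X * Y)) with huniv | huniv
  · exact min_le_of_right_le huniv
  have hHtop : H ≠ ⊤ := by
    rintro rfl
    exact (hHK.trans_lt huniv).ne rfl
  refine min_le_of_left_le ((tsub_le_tsub_left ?_ _).trans tsub_tsub_le)
  exact hdef.trans (le_iSup_of_le ⟨H, hHtop, hH, hHK⟩ le_rfl)

/-- Kneser-type theorem for locally compact abelian groups: if
`μ(X·Y) < μ X + μ Y` then some compact subgroup `H` has
`μ H ≥ μ X + μ Y − μ(X·Y)`; in particular
`μ(X·Y) ≥ min (μ X + μ Y − sup_H μ H) (μ G)`, the sup ranging over proper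
compact subgroups `H` with `μ H ≤ μ(X·Y)`. -/
theorem kneser_abelian
    {G : Type*} [CommGroup G] [TopologicalSpace G] [IsTopologicalGroup G]
    [LocallyCompactSpace G] [T2Space G]
    [MeasurableSpace G] [BorelSpace G]
    (μ : Measure G) [μ.IsHaarMeasure]
    (X Y : Set G) (hXne : X.Nonempty) (hYne : Y.Nonempty)
    (hX : IsCompact X) (hY : IsCompact Y)
    (hlt : μ (X * Y) < μ X + μ Y) :
    (∃ H : Subgroup G, IsCompact (H : Set G) ∧
      μ X + μ Y - μ (X * Y) ≤ μ (H : Set G)) ∧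
    min (μ X + μ Y -
        ⨆ H : {H : Subgroup G // H ≠ ⊤ ∧ IsCompact (H : Set G) ∧
          μ (H : Set G) ≤ μ (X * Y)}, μ ((H : Subgroup G) : Set G))
      (μ Set.univ) ≤ μ (X * Y) :=
  kneser_abelian_general μ X Y hXne hYne hX hY
end

section
/- Let G be a locally compact group with left Haar measure μ, ν = μ⁻¹, and modular function Δ. Suppose X, Y are nonempty compact subsets of G, x₀ ∈ X maximizes Δ on X, y₀ ∈ Y minimizes Δ on Y. Then X* = x₀⁻¹·X ⊆ {g : Δ(g) ≤ 1}, Y* = Y·y₀⁻¹ ⊆ {g : Δ(g) ≥ 1}, the identity lies in X* ∩ Y*, and ν(X*)/ν(X*Y*) + μ(Y*)/μ(X*Y*) = ν(X)/ν(XY) + μ(Y)/μ(XY). -/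
open MeasureTheory Set Pointwise
open scoped NNReal ENNReal

/-! Left translation by `x₀⁻¹` scales `ν` by `Δ x₀` and leaves `μ` unchanged, right translation
by `y₀⁻¹` scales `μ` by `Δ y₀⁻¹` and leaves `ν` unchanged; so each of the two quotients has its
numerator and denominator scaled by the same positive finite factor. The inclusions are the
extremality of `x₀` and `y₀` read through the multiplicativity of `Δ`. -/

theorem ENNReal.toReal_mul_div_toReal_mul_left {c : ℝ≥0∞} (a b : ℝ≥0∞) (hc : c ≠ 0)
    (hc' : c ≠ ⊤) : (c * a).toReal / (c * b).toReal = a.toReal / b.toReal := by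
  rw [← ENNReal.toReal_div, ← ENNReal.toReal_div, ENNReal.mul_div_mul_left _ _ hc hc']

section Multiplicative

variable {G M₀ : Type*} [Group G] [GroupWithZero M₀] {Δ : G → M₀}

theorem map_one_of_map_mul (hΔ0 : ∀ g, Δ g ≠ 0) (hΔmul : ∀ a b, Δ (a * b) = Δ a * Δ b) :
    Δ 1 = 1 :=
  mul_left_cancel₀ (hΔ0 1) (by rw [← hΔmul, mul_one, mul_one])

theorem map_inv_of_map_mul (hΔ0 : ∀ g, Δ g ≠ 0) (hΔmul : ∀ a b, Δ (a * b) = Δ a * Δ b)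
    (g : G) : Δ g⁻¹ = (Δ g)⁻¹ :=
  eq_inv_of_mul_eq_one_left (by rw [← hΔmul, inv_mul_cancel, map_one_of_map_mul hΔ0 hΔmul])

end Multiplicative

section Extremal

variable {G : Type*} [Group G] {Δ : G → ℝ≥0}

theorem singleton_inv_mul_subset_of_forall_le (hΔ0 : ∀ g, Δ g ≠ 0)
    (hΔmul : ∀ a b, Δ (a * b) = Δ a * Δ b) {X : Set G} {x₀ : G} (hmax : ∀ x ∈ X, Δ x ≤ Δ x₀) :
    {x₀⁻¹} * X ⊆ {g | Δ g ≤ 1} := by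
  rintro _ ⟨_, rfl, x, hx, rfl⟩
  rw [mem_ofPred_eq, hΔmul, map_inv_of_map_mul hΔ0 hΔmul,
    inv_mul_le_one₀ (pos_iff_ne_zero.2 (hΔ0 _))]
  exact hmax x hx

theorem mul_singleton_inv_subset_of_forall_le (hΔ0 : ∀ g, Δ g ≠ 0)
    (hΔmul : ∀ a b, Δ (a * b) = Δ a * Δ b) {Y : Set G} {y₀ : G} (hmin : ∀ y ∈ Y, Δ y₀ ≤ Δ y) :
    Y * {y₀⁻¹} ⊆ {g | 1 ≤ Δ g} := by
  rintro _ ⟨y, hy, _, rfl, rfl⟩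
  rw [mem_ofPred_eq, hΔmul, map_inv_of_map_mul hΔ0 hΔmul, ← div_eq_mul_inv,
    one_le_div₀ (pos_iff_ne_zero.2 (hΔ0 _))]
  exact hmin y hy

end Extremal

section Translation

variable {G : Type*} [Group G] [MeasurableSpace G] {μ ν : Measure G} {Δ : G → ℝ≥0}

theorem measure_singleton_mul [MeasurableMul G] [μ.IsMulLeftInvariant] (g : G) (A : Set G) :
    μ ({g} * A) = μ A := by
  rw [← smul_eq_mul, singleton_smul, measure_smul]

theorem measure_mul_singleton_of_inv [MeasurableMul G] [μ.IsMulLeftInvariant]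
    (hν : ∀ A : Set G, ν A = μ A⁻¹) (A : Set G) (g : G) : ν (A * {g}) = ν A := by
  rw [hν, hν, mul_inv_rev, inv_singleton, measure_singleton_mul]

theorem measure_singleton_mul_of_inv [MeasurableInv G] (hν : ∀ A : Set G, ν A = μ A⁻¹)
    (hΔ : ∀ (g : G) (A : Set G), MeasurableSet A → μ (A * {g}) = (Δ g : ℝ≥0∞) * μ A)
    (g : G) {A : Set G} (hA : MeasurableSet A) : ν ({g} * A) = (Δ g⁻¹ : ℝ≥0∞) * ν A := by
  rw [hν, hν, mul_inv_rev, inv_singleton, hΔ _ _ hA.inv]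

end Translation

theorem normalization_translates_general
    {G : Type*} [Group G] [TopologicalSpace G] [IsTopologicalGroup G]
    [T2Space G]
    [MeasurableSpace G] [BorelSpace G]
    (μ : Measure G) [μ.IsHaarMeasure]
    (ν : Measure G) (hν : ∀ A : Set G, ν A = μ A⁻¹)
    (Δ : G → ℝ≥0) (hΔpos : ∀ g, 0 < Δ g)
    (hΔhom : ∀ a b : G, Δ (a * b) = Δ a * Δ b)
    (hΔ : ∀ (g : G) (A : Set G), MeasurableSet A →
      μ (A * {g}) = (Δ g : ENNReal) * μ A)
    (X Y : Set G)
    (hX : IsCompact X) (hY : IsCompact Y)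
    (x₀ : G) (hx₀ : x₀ ∈ X) (hx₀max : ∀ x ∈ X, Δ x ≤ Δ x₀)
    (y₀ : G) (hy₀ : y₀ ∈ Y) (hy₀min : ∀ y ∈ Y, Δ y₀ ≤ Δ y) :
    ({x₀⁻¹} : Set G) * X ⊆ {g : G | Δ g ≤ 1} ∧
    Y * ({y₀⁻¹} : Set G) ⊆ {g : G | 1 ≤ Δ g} ∧
    (1 : G) ∈ (({x₀⁻¹} : Set G) * X) ∩ (Y * ({y₀⁻¹} : Set G)) ∧
    (ν (({x₀⁻¹} : Set G) * X)).toReal /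
        (ν (({x₀⁻¹} : Set G) * X * (Y * ({y₀⁻¹} : Set G)))).toReal +
      (μ (Y * ({y₀⁻¹} : Set G))).toReal /
        (μ (({x₀⁻¹} : Set G) * X * (Y * ({y₀⁻¹} : Set G)))).toReal =
    (ν X).toReal / (ν (X * Y)).toReal +
      (μ Y).toReal / (μ (X * Y)).toReal := by
  have hΔ0 : ∀ g, Δ g ≠ 0 := fun g => (hΔpos g).ne'
  have hXY : IsCompact (X * Y) := hX.mul hY
  have hprod : ({x₀⁻¹} : Set G) * X * (Y * {y₀⁻¹}) = {x₀⁻¹} * (X * Y) * {y₀⁻¹} := by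
    simp only [mul_assoc]
  have hν_prod : ν ({x₀⁻¹} * (X * Y) * {y₀⁻¹}) = (Δ x₀ : ℝ≥0∞) * ν (X * Y) := by
    rw [measure_mul_singleton_of_inv hν, measure_singleton_mul_of_inv hν hΔ _ hXY.measurableSet,
      inv_inv]
  have hμ_prod : μ ({x₀⁻¹} * (X * Y) * {y₀⁻¹}) = (Δ y₀⁻¹ : ℝ≥0∞) * μ (X * Y) := by
    rw [hΔ _ _ (isCompact_singleton.mul hXY).measurableSet, measure_singleton_mul]
  refine ⟨singleton_inv_mul_subset_of_forall_le hΔ0 hΔhom hx₀max,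
    mul_singleton_inv_subset_of_forall_le hΔ0 hΔhom hy₀min,
    ⟨⟨x₀⁻¹, rfl, x₀, hx₀, inv_mul_cancel x₀⟩, ⟨y₀, hy₀, y₀⁻¹, rfl, mul_inv_cancel y₀⟩⟩, ?_⟩
  rw [hprod, hν_prod, hμ_prod, measure_singleton_mul_of_inv hν hΔ _ hX.measurableSet, inv_inv,
    hΔ _ _ hY.measurableSet,
    ENNReal.toReal_mul_div_toReal_mul_left _ _ (ENNReal.coe_ne_zero.2 (hΔ0 _)) ENNReal.coe_ne_top,
    ENNReal.toReal_mul_div_toReal_mul_left _ _ (ENNReal.coe_ne_zero.2 (hΔ0 _)) ENNReal.coe_ne_top]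

/-- Normalization step: translating `X` by `x₀⁻¹` on the left (where `x₀`
maximizes `Δ` on `X`) and `Y` by `y₀⁻¹` on the right (where `y₀` minimizes `Δ`
on `Y`) puts `X* ⊆ G_{≤1}`, `Y* ⊆ G_{≥1}`, `1 ∈ X* ∩ Y*`, and preserves the
quantity `ν(X)/ν(XY) + μ(Y)/μ(XY)`. -/
theorem normalization_translates
    {G : Type*} [Group G] [TopologicalSpace G] [IsTopologicalGroup G]
    [LocallyCompactSpace G] [T2Space G]
    [MeasurableSpace G] [BorelSpace G]
    (μ : Measure G) [μ.IsHaarMeasure]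
    (ν : Measure G) (hν : ∀ A : Set G, ν A = μ A⁻¹)
    (Δ : G → ℝ≥0) (hΔpos : ∀ g, 0 < Δ g) (hΔcont : Continuous Δ)
    (hΔhom : ∀ a b : G, Δ (a * b) = Δ a * Δ b)
    (hΔ : ∀ (g : G) (A : Set G), MeasurableSet A →
      μ (A * {g}) = (Δ g : ENNReal) * μ A)
    (X Y : Set G) (hXne : X.Nonempty) (hYne : Y.Nonempty)
    (hX : IsCompact X) (hY : IsCompact Y)
    (x₀ : G) (hx₀ : x₀ ∈ X) (hx₀max : ∀ x ∈ X, Δ x ≤ Δ x₀)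
    (y₀ : G) (hy₀ : y₀ ∈ Y) (hy₀min : ∀ y ∈ Y, Δ y₀ ≤ Δ y) :
    ({x₀⁻¹} : Set G) * X ⊆ {g : G | Δ g ≤ 1} ∧
    Y * ({y₀⁻¹} : Set G) ⊆ {g : G | 1 ≤ Δ g} ∧
    (1 : G) ∈ (({x₀⁻¹} : Set G) * X) ∩ (Y * ({y₀⁻¹} : Set G)) ∧
    (ν (({x₀⁻¹} : Set G) * X)).toReal /
        (ν (({x₀⁻¹} : Set G) * X * (Y * ({y₀⁻¹} : Set G)))).toReal +
      (μ (Y * ({y₀⁻¹} : Set G))).toReal /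
        (μ (({x₀⁻¹} : Set G) * X * (Y * ({y₀⁻¹} : Set G)))).toReal =
    (ν X).toReal / (ν (X * Y)).toReal +
      (μ Y).toReal / (μ (X * Y)).toReal :=
  normalization_translates_general μ ν hν Δ hΔpos hΔhom hΔ X Y hX hY x₀ hx₀ hx₀max y₀ hy₀ hy₀min
end
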